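/- arXiv:math/9712219 — 3 statements merged into one kernel-verified Lean document; each statement's English description precedes it below -/
import Mathlib

section
/- For every positive integer n there exists an injective group homomorphism from Aut(F_n) into Out(F_{n+1}), where F_k denotes the free group of rank k. (Concretely, extending each automorphism of F_n to F_{n+1} by fixing the extra basis element and passing to outer classes is injective.) -/
/-- The subgroup of inner automorphisms of a group `G`, as a subgroup of `MulAut G`. -/
def Inn (G : Type*) [Group G] : Subgroup (MulAut G) := (MulAut.conj : G →* MulAut G).range

instance Inn.normal (G : Type*) [Group G] : (Inn G).Normal := by
  constructor
  rintro - ⟨g, rfl⟩ φ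
  refine ⟨φ g, ?_⟩
  ext x
  simp [MulAut.conj, mul_assoc]

/-- The outer automorphism group of `G`. -/
def Out (G : Type*) [Group G] := MulAut G ⧸ Inn G

instance (G : Type*) [Group G] : Group (Out G) := QuotientGroup.Quotient.group (Inn G)

/-- The canonical projection `Aut(G) → Out(G)`. -/
def Out.mk {G : Type*} [Group G] : MulAut G →* Out G := QuotientGroup.mk' (Inn G)

/-! Extend `φ ∈ Aut(F_n)` to `F_{n+1}` by fixing the new generator `t`. If the extension is
conjugation by `g`, then `g` commutes with `t`, hence is a power of `t`, because the centralizer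
of a basis element of a free group is the cyclic group it generates. Killing `t` then turns the
equation `g x g⁻¹ = φ x` for `x ∈ F_n` into `x = φ x`. -/

namespace FreeGroup

theorem mk_singleton_mem_zpowers_of {α : Type*} (a : α) (b : Bool) :
    mk [(a, b)] ∈ Subgroup.zpowers (of a) := by
  cases b
  · exact Subgroup.inv_mem _ (Subgroup.mem_zpowers (of a))
  · exact Subgroup.mem_zpowers (of a)

section Centralizer

variable {α : Type*} [DecidableEq α]

theorem toWord_of_mul {a : α} {g : FreeGroup α} (h : ∀ p ∈ g.toWord.head?, p.1 ≠ a) :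
    (of a * g).toWord = (a, true) :: g.toWord := by
  rw [toWord_mul, toWord_of]
  refine IsReduced.reduce_eq (List.IsChain.append IsReduced.singleton isReduced_toWord ?_)
  simp only [List.getLast?_singleton, Option.mem_def, Option.some.injEq, forall_eq']
  exact fun p hp hap => absurd hap.symm (h p hp)

theorem toWord_mul_of {a : α} {g : FreeGroup α} (h : ∀ p ∈ g.toWord.getLast?, p.1 ≠ a) :
    (g * of a).toWord = g.toWord ++ [(a, true)] := by
  rw [toWord_mul, toWord_of]
  refine IsReduced.reduce_eq (List.IsChain.append isReduced_toWord IsReduced.singleton ?_)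
  simp only [List.head?_singleton, Option.mem_def, Option.some.injEq, forall_eq']
  exact fun p hp hpa => absurd hpa (h p hp)

theorem not_commute_of_toWord_ends_ne {a : α} {g : FreeGroup α} (hg : g ≠ 1)
    (hhead : ∀ p ∈ g.toWord.head?, p.1 ≠ a) (hlast : ∀ p ∈ g.toWord.getLast?, p.1 ≠ a) :
    ¬ Commute g (of a) := by
  intro h
  obtain ⟨p, L, hL⟩ := List.exists_cons_of_ne_nil (toWord_eq_nil_iff.not.2 hg)
  have := congrArg (fun x => x.toWord.head?) h.eq
  simp only [toWord_mul_of hlast, toWord_of_mul hhead, hL, List.cons_append, List.head?_cons,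
    Option.some.injEq] at this
  exact hhead p (by simp [hL]) (by rw [this])

theorem centralizer_singleton_of (a : α) :
    Subgroup.centralizer {of a} = Subgroup.zpowers (of a) := by
  have hle : Subgroup.zpowers (of a) ≤ Subgroup.centralizer {of a} :=
    Subgroup.zpowers_le.2 (Subgroup.mem_centralizer_singleton_iff.2 rfl)
  refine le_antisymm (fun g hg => ?_) hle
  induction hN : g.norm using Nat.strong_induction_on generalizing g with
  | _ N ih =>
  have strip : ∀ p L, p.1 = a → (g.toWord = p :: L ∨ g.toWord = L ++ [p]) →
      g ∈ Subgroup.zpowers (of a) := by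
    rintro ⟨a, b⟩ L rfl hL
    have hu := mk_singleton_mem_zpowers_of a b
    have hlt : (mk L).norm < N := hN ▸ (norm_mk_le.trans_lt (by rcases hL with hL | hL <;>
      simp [norm, hL]))
    rcases hL with hL | hL
    · have hg' : g = mk [(a, b)] * mk L := by rw [mul_mk, List.singleton_append, ← hL, mk_toWord]
      have hx : mk L ∈ Subgroup.centralizer {of a} := by
        rw [show mk L = (mk [(a, b)])⁻¹ * g by rw [hg', inv_mul_cancel_left]]
        exact Subgroup.mul_mem _ (Subgroup.inv_mem _ (hle hu)) hg
      exact hg' ▸ Subgroup.mul_mem _ hu (ih _ hlt _ hx rfl)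
    · have hg' : g = mk L * mk [(a, b)] := by rw [mul_mk, ← hL, mk_toWord]
      have hx : mk L ∈ Subgroup.centralizer {of a} := by
        rw [show mk L = g * (mk [(a, b)])⁻¹ by rw [hg', mul_inv_cancel_right]]
        exact Subgroup.mul_mem _ hg (Subgroup.inv_mem _ (hle hu))
      exact hg' ▸ Subgroup.mul_mem _ (ih _ hlt _ hx rfl) hu
  by_cases hhead : ∃ p ∈ g.toWord.head?, p.1 = a
  · obtain ⟨p, hp, hpa⟩ := hhead
    obtain ⟨L, hL⟩ := List.head?_eq_some_iff.1 hp
    exact strip p L hpa (Or.inl hL)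
  by_cases hlast : ∃ p ∈ g.toWord.getLast?, p.1 = a
  · obtain ⟨p, hp, hpa⟩ := hlast
    obtain ⟨L, hL⟩ := List.getLast?_eq_some_iff.1 hp
    exact strip p L hpa (Or.inr hL)
  push Not at hhead hlast
  by_cases hg1 : g = 1
  · exact hg1 ▸ Subgroup.one_mem _
  · exact absurd (Subgroup.mem_centralizer_singleton_iff.1 hg)
      (not_commute_of_toWord_ends_ne hg1 hhead hlast)

end Centralizer

section Extension

variable {n : ℕ}

def extendEnd (f : FreeGroup (Fin n) →* FreeGroup (Fin n)) :
    FreeGroup (Fin (n + 1)) →* FreeGroup (Fin (n + 1)) :=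
  lift (Fin.lastCases (of (Fin.last n)) fun j => map Fin.castSucc (f (of j)))

@[simp]
theorem extendEnd_of_last (f : FreeGroup (Fin n) →* FreeGroup (Fin n)) :
    extendEnd f (of (Fin.last n)) = of (Fin.last n) := by
  simp [extendEnd]

@[simp]
theorem extendEnd_of_castSucc (f : FreeGroup (Fin n) →* FreeGroup (Fin n)) (j : Fin n) :
    extendEnd f (of j.castSucc) = map Fin.castSucc (f (of j)) := by
  simp [extendEnd]

theorem extendEnd_map_castSucc (f : FreeGroup (Fin n) →* FreeGroup (Fin n))
    (w : FreeGroup (Fin n)) : extendEnd f (map Fin.castSucc w) = map Fin.castSucc (f w) :=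
  DFunLike.congr_fun (ext_hom ((extendEnd f).comp (map Fin.castSucc))
    ((map Fin.castSucc).comp f) fun j => by simp) w

theorem extendEnd_comp (f g : FreeGroup (Fin n) →* FreeGroup (Fin n)) :
    extendEnd (f.comp g) = (extendEnd f).comp (extendEnd g) :=
  ext_hom _ _ fun i => Fin.lastCases (by simp) (fun j => by simp [extendEnd_map_castSucc]) i

theorem extendEnd_id : extendEnd (MonoidHom.id (FreeGroup (Fin n))) = MonoidHom.id _ :=
  ext_hom _ _ fun i => Fin.lastCases (by simp) (fun j => by simp) i

def extendAut : MulAut (FreeGroup (Fin n)) →* MulAut (FreeGroup (Fin (n + 1))) where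
  toFun φ := (extendEnd φ.toMonoidHom).toMulEquiv (extendEnd φ.symm.toMonoidHom)
    (by rw [← extendEnd_comp, ← extendEnd_id]; congr 1; ext; simp)
    (by rw [← extendEnd_comp, ← extendEnd_id]; congr 1; ext; simp)
  map_one' := MulEquiv.ext fun x => DFunLike.congr_fun extendEnd_id x
  map_mul' φ ψ := MulEquiv.ext fun x =>
    DFunLike.congr_fun (extendEnd_comp φ.toMonoidHom ψ.toMonoidHom) x

def killLast : FreeGroup (Fin (n + 1)) →* FreeGroup (Fin n) :=
  lift (Fin.lastCases 1 of)

@[simp]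
theorem killLast_of_last : killLast (of (Fin.last n)) = 1 := by
  simp [killLast]

@[simp]
theorem killLast_of_castSucc (j : Fin n) : killLast (of j.castSucc) = of j := by
  simp [killLast]

theorem killLast_map_castSucc (w : FreeGroup (Fin n)) : killLast (map Fin.castSucc w) = w :=
  DFunLike.congr_fun (ext_hom (killLast.comp (map Fin.castSucc)) (MonoidHom.id _)
    fun j => by simp) w

theorem eq_one_of_extendAut_mem_inn {φ : MulAut (FreeGroup (Fin n))}
    (h : extendAut φ ∈ Inn (FreeGroup (Fin (n + 1)))) : φ = 1 := by
  obtain ⟨g, hg⟩ := h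
  have hconj (x) : g * x * g⁻¹ = extendEnd φ.toMonoidHom x := by
    rw [← MulAut.conj_apply, hg]; rfl
  have hcomm : g ∈ Subgroup.centralizer {of (Fin.last n)} := by
    rw [Subgroup.mem_centralizer_singleton_iff, ← mul_inv_eq_iff_eq_mul, hconj,
      extendEnd_of_last]
  rw [centralizer_singleton_of, Subgroup.mem_zpowers_iff] at hcomm
  obtain ⟨k, rfl⟩ := hcomm
  have hkill : killLast (of (Fin.last n) ^ k) = 1 := by rw [map_zpow, killLast_of_last, one_zpow]
  refine MulEquiv.toMonoidHom_injective (ext_hom _ _ fun j => ?_)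
  simpa [hkill, killLast_map_castSucc] using (congrArg killLast (hconj (of j.castSucc))).symm

end Extension

end FreeGroup

theorem aut_embeds_in_out_succ_general (n : ℕ) :
    ∃ f : MulAut (FreeGroup (Fin n)) →* Out (FreeGroup (Fin (n + 1))),
      Function.Injective f :=
  ⟨Out.mk.comp FreeGroup.extendAut, (injective_iff_map_eq_one _).2 fun _ h =>
    FreeGroup.eq_one_of_extendAut_mem_inn ((QuotientGroup.eq_one_iff _).1 h)⟩

/-- `Aut(F_n)` embeds into `Out(F_{n+1})`. -/
theorem aut_embeds_in_out_succ (n : ℕ) (hn : 0 < n) :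
    ∃ f : MulAut (FreeGroup (Fin n)) →* Out (FreeGroup (Fin (n + 1))),
      Function.Injective f :=
  aut_embeds_in_out_succ_general n
end

section
/- Let G be a free group (on any set of generators) and let F be a nonabelian subgroup of G. Then the centralizer of F in G is trivial: the only element of G commuting with every element of F is the identity. Equivalently, no non-trivial inner automorphism of G fixes F pointwise. -/
/-!
A nontrivial element `g` of a free group commuting with a generator `of t` must begin with
the letter `t`: otherwise `of t * g` is reduced as written, so `g * of t` has the same length
and its word, a sublist of the word of `g` followed by `t`, must be all of it; the two words then
differ in their first letter.
So if `g ≠ 1` is central, all generators coincide with the first letter of `g`, the group is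
infinite cyclic and hence abelian. Now let `g` centralize a nonabelian subgroup `F` of a free
group. By Nielsen–Schreier the centralizer of `g` is free; it contains `F`, so it is nonabelian,
and `g` lies in its center. Hence `g = 1`.
-/

open Subgroup

namespace FreeGroup

variable {α : Type*}

theorem toWord_of_mul_of_fst_ne [DecidableEq α] {t : α} {g : FreeGroup α} {p : α × Bool}
    {w : List (α × Bool)} (hw : g.toWord = p :: w) (ht : t ≠ p.1) :
    (of t * g).toWord = (t, true) :: g.toWord := by
  rw [toWord_mul, toWord_of, List.singleton_append, reduce.cons, reduce_toWord, hw]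
  simp [ht]

theorem fst_eq_of_commute_of [DecidableEq α] {t : α} {g : FreeGroup α} {p : α × Bool}
    {w : List (α × Bool)} (hw : g.toWord = p :: w) (h : Commute (of t) g) : p.1 = t := by
  by_contra hne
  have hsub : List.Sublist (g * of t).toWord (g.toWord ++ [(t, true)]) := by
    simpa only [toWord_of] using toWord_mul_sublist g (of t)
  rw [← h.eq, toWord_of_mul_of_fst_ne hw (Ne.symm hne)] at hsub
  have heq := hsub.eq_of_length (by simp)
  rw [hw] at heq
  exact hne (congrArg Prod.fst (List.head_eq_of_cons_eq heq)).symm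

theorem center_eq_bot_of_not_commute {x y : FreeGroup α} (h : ¬Commute x y) :
    center (FreeGroup α) = ⊥ := by
  classical
  refine eq_bot_iff.2 fun g hg => ?_
  by_contra hne
  obtain ⟨p, w, hw⟩ : ∃ p w, g.toWord = p :: w :=
    List.exists_cons_of_ne_nil (mt toWord_eq_nil_iff.1 hne)
  let : Unique α :=
    { default := p.1
      uniq := fun t => (fst_eq_of_commute_of hw (mem_center_iff.1 hg (of t))).symm }
  let := IsCyclic.commGroup (α := FreeGroup α)
  exact h (Commute.all x y)

end FreeGroup

theorem IsFreeGroup.center_eq_bot_of_not_commute {G : Type*} [Group G] [IsFreeGroup G]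
    {x y : G} (h : ¬Commute x y) : center G = ⊥ := by
  let e := IsFreeGroup.toFreeGroup G
  have hbot := FreeGroup.center_eq_bot_of_not_commute (x := e x) (y := e y)
    fun hc => h (by simpa using hc.map e.symm)
  refine eq_bot_iff.2 fun g hg => ?_
  have hge : e g ∈ center _ := mem_center_iff.2 fun k => by
    simpa using congrArg e (mem_center_iff.1 hg (e.symm k))
  rw [hbot, mem_bot] at hge
  simpa using hge

/-- In a free group, the centralizer of a nonabelian subgroup is trivial: only the
identity commutes with every element of the subgroup. -/
theorem centralizer_of_nonabelian_subgroup_of_free_group_trivial {α : Type*}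
    (F : Subgroup (FreeGroup α)) (hna : ∃ a ∈ F, ∃ b ∈ F, a * b ≠ b * a) :
    ∀ g : FreeGroup α, (∀ x ∈ F, g * x = x * g) → g = 1 := by
  intro g hg
  obtain ⟨a, ha, b, hb, hab⟩ := hna
  let H := centralizer {g}
  have hFH : F ≤ H := fun x hx => mem_centralizer_singleton_iff.2 (hg x hx).symm
  have hgH : g ∈ H := mem_centralizer_singleton_iff.2 rfl
  have hcenter : (⟨g, hgH⟩ : H) ∈ center H :=
    mem_center_iff.2 fun k => Subtype.ext (mem_centralizer_singleton_iff.1 k.2)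
  have hnc : ¬Commute (⟨a, hFH ha⟩ : H) ⟨b, hFH hb⟩ := fun hc => hab (congrArg Subtype.val hc.eq)
  rw [IsFreeGroup.center_eq_bot_of_not_commute hnc, mem_bot] at hcenter
  exact congrArg Subtype.val hcenter
end

section
/- Every solvable subgroup of a free group is cyclic (trivial or infinite cyclic). -/
/-!
By Nielsen–Schreier a subgroup of a free group is free, so it suffices to show that a solvable
free group has rank at most one. A free group on at least two generators maps onto the
non-solvable group `S₅`, which is generated by a 5-cycle and a transposition, and solvability
passes to quotients.
-/

open Equiv Equiv.Perm

theorem Equiv.Perm.closure_finRotate_swap_zero_one_eq_top (n : ℕ) :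
    Subgroup.closure ({finRotate (n + 2), swap 0 1} : Set (Perm (Fin (n + 2)))) = ⊤ := by
  simpa using closure_cycle_adjacent_swap isCycle_finRotate support_finRotate 0

namespace FreeGroup

theorem exists_surjective_of_closure_pair_eq_top {S G : Type*} [Nontrivial S] [Group G]
    {x y : G} (hxy : Subgroup.closure {x, y} = ⊤) :
    ∃ f : FreeGroup S →* G, Function.Surjective f := by
  classical
  obtain ⟨a, b, hab⟩ := exists_pair_ne S
  let f : FreeGroup S →* G := lift fun s => if s = a then x else y
  refine ⟨f, ?_⟩
  rw [← MonoidHom.range_eq_top, eq_top_iff, ← hxy, Subgroup.closure_le, Set.insert_subset_iff,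
    Set.singleton_subset_iff]
  exact ⟨⟨of a, by simp [f]⟩, ⟨of b, by simp [f, hab.symm]⟩⟩

theorem subsingleton_of_isSolvable {S : Type*} [Group.IsSolvable (FreeGroup S)] :
    Subsingleton S := by
  by_contra hS
  rw [not_subsingleton_iff_nontrivial] at hS
  obtain ⟨f, hf⟩ := exists_surjective_of_closure_pair_eq_top (S := S)
    (closure_finRotate_swap_zero_one_eq_top 3)
  exact not_isSolvable_fin_5 (Group.isSolvable_of_surjective hf)

theorem isCyclic_of_subsingleton {S : Type*} [Subsingleton S] : IsCyclic (FreeGroup S) := by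
  cases isEmpty_or_nonempty S
  · infer_instance
  · have : Unique S := uniqueOfSubsingleton (Classical.arbitrary S)
    infer_instance

end FreeGroup

theorem IsFreeGroup.isCyclic_of_isSolvable {G : Type*} [Group G] [IsFreeGroup G]
    [Group.IsSolvable G] : IsCyclic G := by
  let e := IsFreeGroup.toFreeGroup G
  have : Group.IsSolvable (FreeGroup (Generators G)) :=
    Group.isSolvable_of_surjective (f := e.toMonoidHom) e.surjective
  have := FreeGroup.subsingleton_of_isSolvable (S := Generators G)
  have := FreeGroup.isCyclic_of_subsingleton (S := Generators G)
  exact isCyclic_of_surjective e.symm.toMonoidHom e.symm.surjective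

/-- Every solvable subgroup of a free group is cyclic. -/
theorem solvable_subgroup_of_free_group_is_cyclic {α : Type*}
    (H : Subgroup (FreeGroup α)) (hH : IsSolvable H) : IsCyclic H :=
  have : Group.IsSolvable H := hH
  IsFreeGroup.isCyclic_of_isSolvable
end
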